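/- arXiv:0808.1435 — 3 statements merged into one kernel-verified Lean document; each statement's English description precedes it below -/
import Mathlib

section
/- For i ≥ 1, the generating function M_i(t) = ∑_{n≥0} |M(i,n)| t^n of pairs of intersecting walks starting at heights 0 and 2i equals D(t)^i / (1 − 4t), where D(t) = C(t) − 1. -/
open PowerSeries Finset

/-- Generating function of the Catalan numbers `C_n = (1/(n+1))·binom(2n,n)`. -/
noncomputable def catGF : PowerSeries ℚ :=
  PowerSeries.mk fun n => (Nat.choose (2 * n) n : ℚ) / (n + 1)

/-- `D(t) = C(t) - 1`. -/
noncomputable def DGF : PowerSeries ℚ := catGF - 1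

/-- A lattice walk of length `n` with steps `±1`. -/
def IsWalk (n : ℕ) (L : Fin (n + 1) → ℤ) : Prop :=
  ∀ k : Fin n, |L k.succ - L k.castSucc| = 1

/-- Two walks intersect (share a common point at the same time). -/
def Meets {m : ℕ} (L L' : Fin m → ℤ) : Prop := ∃ k, L k = L' k

/-- All triples of walks of length `n` starting at heights `0, 2i, 2i+2j`. -/
def USet (i j n : ℕ) :
    Set ((Fin (n + 1) → ℤ) × (Fin (n + 1) → ℤ) × (Fin (n + 1) → ℤ)) :=
  {T | IsWalk n T.1 ∧ IsWalk n T.2.1 ∧ IsWalk n T.2.2 ∧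
    T.1 0 = 0 ∧ T.2.1 0 = 2 * i ∧ T.2.2 0 = 2 * i + 2 * j}

/-- Triples where `L₁` and `L₂` are nonintersecting. -/
def W12Set (i j n : ℕ) := {T ∈ USet i j n | ¬ Meets T.1 T.2.1}

/-- Triples where `L₂` and `L₃` are nonintersecting. -/
def W23Set (i j n : ℕ) := {T ∈ USet i j n | ¬ Meets T.2.1 T.2.2}

/-- Triples where `L₁` intersects `L₃`. -/
def M13Set (i j n : ℕ) := {T ∈ USet i j n | Meets T.1 T.2.2}

/-- Triples where `L₂` intersects both `L₁` and `L₃`. -/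
def M1223Set (i j n : ℕ) :=
  {T ∈ USet i j n | Meets T.2.1 T.1 ∧ Meets T.2.1 T.2.2}

/-- Vicious (pairwise nonintersecting) triples. -/
def VSet (i j n : ℕ) :=
  {T ∈ USet i j n | ¬ Meets T.1 T.2.1 ∧ ¬ Meets T.2.1 T.2.2 ∧ ¬ Meets T.1 T.2.2}

/-- Pairs of walks of length `n` starting at heights `0` and `2i`. -/
def PairSet (i n : ℕ) : Set ((Fin (n + 1) → ℤ) × (Fin (n + 1) → ℤ)) :=
  {P | IsWalk n P.1 ∧ IsWalk n P.2 ∧ P.1 0 = 0 ∧ P.2 0 = 2 * i}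

/-- Intersecting pairs. -/
def MSet (i n : ℕ) := {P ∈ PairSet i n | Meets P.1 P.2}

/-- Nonintersecting (vicious) pairs. -/
def NSet (i n : ℕ) := {P ∈ PairSet i n | ¬ Meets P.1 P.2}

/-- Converging pairs: never meet before time `n`, meet at time `n`. -/
def TSet (i n : ℕ) :=
  {P ∈ PairSet i n | (∀ k : Fin (n + 1), (k : ℕ) < n → P.1 k ≠ P.2 k) ∧
    P.1 (Fin.last n) = P.2 (Fin.last n)}

/-- 2-watermelons of length `n`. -/
def MelonSet (n : ℕ) : Set ((Fin (n + 1) → ℤ) × (Fin (n + 1) → ℤ)) :=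
  {P | IsWalk n P.1 ∧ IsWalk n P.2 ∧ P.1 0 = 0 ∧ P.2 0 = 2 ∧
    P.2 (Fin.last n) = P.1 (Fin.last n) + 2 ∧ ∀ k, P.1 k < P.2 k}

/-- Partial Dyck paths of length `2n` from height `2i` to `0`, strictly positive before the end. -/
def PDyckSet (i n : ℕ) : Set (Fin (2 * n + 1) → ℤ) :=
  {Q | IsWalk (2 * n) Q ∧ Q 0 = 2 * i ∧ Q (Fin.last (2 * n)) = 0 ∧
    ∀ k : Fin (2 * n + 1), (k : ℕ) < 2 * n → 0 < Q k}

/-!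
The number of intersecting pairs of walks of length `n` depends only on the difference of the
starting heights; write `a_i(n)` when this difference is `2i`. If the starting heights differ,
the pair cannot meet at time `0`, so splitting according to the four possible first steps gives
`a_i(n+1) = a_{i-1}(n) + 2 a_i(n) + a_{i+1}(n)` for `i ≥ 1`, while `a_0(n) = 4^n` and
`a_i(0) = 0` for `i ≥ 1`. The coefficients of `D^i / (1 - 4t)` obey the same recursion because
`D = t (1 + D)^2`, which is the Catalan equation `C = 1 + t C^2`.
-/

theorem Set.ncard_eq_ncard_sep_add_ncard_sep {α : Type*} {s : Set α} (hs : s.Finite)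
    {p q : α → Prop} (hpq : ∀ x ∈ s, p x ∨ q x) (hexcl : ∀ x ∈ s, p x → ¬ q x) :
    s.ncard = {x ∈ s | p x}.ncard + {x ∈ s | q x}.ncard := by
  have hsplit : s = {x ∈ s | p x} ∪ {x ∈ s | q x} :=
    Set.Subset.antisymm (fun x hx => (hpq x hx).imp (⟨hx, ·⟩) (⟨hx, ·⟩))
      (Set.union_subset (Set.sep_subset _ _) (Set.sep_subset _ _))
  have hdisj : Disjoint {x ∈ s | p x} {x ∈ s | q x} :=
    Set.disjoint_left.mpr fun x hp hq => hexcl x hp.1 hp.2 hq.2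
  conv_lhs => rw [hsplit]
  exact Set.ncard_union_eq hdisj (hs.subset (Set.sep_subset _ _)) (hs.subset (Set.sep_subset _ _))

theorem IsWalk.tail {n : ℕ} {L : Fin (n + 2) → ℤ} (h : IsWalk (n + 1) L) :
    IsWalk n (Fin.tail L) := by
  intro k
  simpa [Fin.tail, ← Fin.succ_castSucc] using h k.succ

theorem IsWalk.cons {n : ℕ} {L : Fin (n + 1) → ℤ} {a : ℤ} (h : IsWalk n L)
    (ha : |L 0 - a| = 1) : IsWalk (n + 1) (Fin.cons a L) := by
  intro k
  induction k using Fin.cases with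
  | zero => simpa using ha
  | succ j => simpa [← Fin.succ_castSucc] using h j

theorem Fin.tail_injOn_head_eq {α : Type*} {n : ℕ} (a : α) :
    Set.InjOn Fin.tail {L : Fin (n + 1) → α | L 0 = a} := by
  intro L hL M hM h
  rw [← Fin.cons_self_tail L, ← Fin.cons_self_tail M, h, show L 0 = M 0 from hL.trans hM.symm]

def walksFrom (a : ℤ) (n : ℕ) : Set (Fin (n + 1) → ℤ) := {L | IsWalk n L ∧ L 0 = a}

theorem apply_one_of_mem_walksFrom {a : ℤ} {n : ℕ} {L : Fin (n + 2) → ℤ}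
    (hL : L ∈ walksFrom a (n + 1)) : L 1 = a + 1 ∨ L 1 = a - 1 := by
  have h := hL.1 0
  rw [Fin.succ_zero_eq_one, Fin.castSucc_zero, hL.2] at h
  rcases abs_eq zero_le_one |>.mp h with h | h
  · exact Or.inl (by linarith)
  · exact Or.inr (by linarith)

theorem image_tail_walksFrom {a c : ℤ} (hc : |c - a| = 1) (n : ℕ) :
    Fin.tail '' {L ∈ walksFrom a (n + 1) | L 1 = c} = walksFrom c n := by
  ext Q
  constructor
  · rintro ⟨L, ⟨⟨hL, -⟩, hL1⟩, rfl⟩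
    exact ⟨hL.tail, by simpa [Fin.tail] using hL1⟩
  · rintro ⟨hQ, hQ0⟩
    exact ⟨Fin.cons a Q, ⟨⟨hQ.cons (by rw [hQ0, hc]), rfl⟩, by simpa using hQ0⟩, Fin.tail_cons _ _⟩

theorem walksFrom_finite_and_ncard_eq (n : ℕ) (a : ℤ) :
    (walksFrom a n).Finite ∧ (walksFrom a n).ncard = 2 ^ n := by
  induction n generalizing a with
  | zero =>
    have : walksFrom a 0 = {fun _ => a} := by
      ext L
      refine ⟨fun ⟨_, hL⟩ => funext fun k => by rw [Fin.fin_one_eq_zero k, hL], ?_⟩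
      rintro rfl
      exact ⟨fun k => k.elim0, rfl⟩
    rw [this]
    exact ⟨Set.finite_singleton _, Set.ncard_singleton _⟩
  | succ n ih =>
    have step : ∀ c, |c - a| = 1 → {L ∈ walksFrom a (n + 1) | L 1 = c}.Finite ∧
        {L ∈ walksFrom a (n + 1) | L 1 = c}.ncard = 2 ^ n := by
      intro c hc
      have hinj : Set.InjOn Fin.tail {L ∈ walksFrom a (n + 1) | L 1 = c} :=
        (Fin.tail_injOn_head_eq a).mono fun L hL => hL.1.2
      rw [← (ih c).2, ← image_tail_walksFrom hc, hinj.ncard_image]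
      exact ⟨Set.Finite.of_finite_image (image_tail_walksFrom hc n ▸ (ih c).1) hinj, rfl⟩
    have hsplit : walksFrom a (n + 1) =
        {L ∈ walksFrom a (n + 1) | L 1 = a + 1} ∪ {L ∈ walksFrom a (n + 1) | L 1 = a - 1} := by
      ext L
      exact ⟨fun hL => (apply_one_of_mem_walksFrom hL).imp (⟨hL, ·⟩) (⟨hL, ·⟩),
        fun hL => hL.elim And.left And.left⟩
    have hdisj : Disjoint {L ∈ walksFrom a (n + 1) | L 1 = a + 1}
        {L ∈ walksFrom a (n + 1) | L 1 = a - 1} :=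
      Set.disjoint_left.mpr fun L h₁ h₂ => by linarith [h₁.2, h₂.2]
    obtain ⟨hfin₁, hcard₁⟩ := step (a + 1) (by simp)
    obtain ⟨hfin₂, hcard₂⟩ := step (a - 1) (by simp)
    rw [hsplit, Set.ncard_union_eq hdisj hfin₁ hfin₂, hcard₁, hcard₂, pow_succ, mul_two]
    exact ⟨hfin₁.union hfin₂, rfl⟩

def meetingPairs (a b : ℤ) (n : ℕ) : Set ((Fin (n + 1) → ℤ) × (Fin (n + 1) → ℤ)) :=
  {P | P.1 ∈ walksFrom a n ∧ P.2 ∈ walksFrom b n ∧ Meets P.1 P.2}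

theorem MSet_eq_meetingPairs (i n : ℕ) : MSet i n = meetingPairs 0 (2 * i) n := by
  ext P
  simp only [MSet, PairSet, meetingPairs, walksFrom, Set.mem_ofPred_eq]
  tauto

theorem meetingPairs_subset (a b : ℤ) (n : ℕ) :
    meetingPairs a b n ⊆ walksFrom a n ×ˢ walksFrom b n :=
  fun _ hP => ⟨hP.1, hP.2.1⟩

theorem meetingPairs_finite (a b : ℤ) (n : ℕ) : (meetingPairs a b n).Finite :=
  ((walksFrom_finite_and_ncard_eq n a).1.prod (walksFrom_finite_and_ncard_eq n b).1).subset
    (meetingPairs_subset a b n)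

theorem ncard_meetingPairs_self (a : ℤ) (n : ℕ) : (meetingPairs a a n).ncard = 4 ^ n := by
  have : meetingPairs a a n = walksFrom a n ×ˢ walksFrom a n :=
    (meetingPairs_subset a a n).antisymm fun P ⟨h₁, h₂⟩ => ⟨h₁, h₂, 0, h₁.2.trans h₂.2.symm⟩
  rw [this, Set.ncard_prod, (walksFrom_finite_and_ncard_eq n a).2, ← mul_pow]
  norm_num

theorem meetingPairs_zero_of_ne {a b : ℤ} (hab : a ≠ b) : meetingPairs a b 0 = ∅ :=
  Set.eq_empty_of_forall_notMem fun _ ⟨h₁, h₂, k, hk⟩ => by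
    rw [Fin.fin_one_eq_zero k, h₁.2, h₂.2] at hk
    exact hab hk

theorem ncard_meetingPairs_add_const (a b c : ℤ) (n : ℕ) :
    (meetingPairs (a + c) (b + c) n).ncard = (meetingPairs a b n).ncard := by
  let shift : (Fin (n + 1) → ℤ) × (Fin (n + 1) → ℤ) → (Fin (n + 1) → ℤ) × (Fin (n + 1) → ℤ) :=
    fun P => (fun k => P.1 k + c, fun k => P.2 k + c)
  have hshift : shift ⁻¹' meetingPairs (a + c) (b + c) n = meetingPairs a b n := by
    ext P
    simp [shift, meetingPairs, walksFrom, Meets, IsWalk]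
  have hsurj : Function.Surjective shift := fun Q =>
    ⟨(fun k => Q.1 k - c, fun k => Q.2 k - c), by simp [shift]⟩
  have hinj : Function.Injective shift := fun P Q h => by
    simp only [shift, Prod.mk.injEq, funext_iff, add_left_inj] at h
    exact Prod.ext (funext h.1) (funext h.2)
  rw [← hshift, Set.ncard_preimage_of_injective_subset_range hinj (by simp [hsurj.range_eq])]

theorem ncard_meetingPairs_congr {a b a' b' : ℤ} (h : b - a = b' - a') (n : ℕ) :
    (meetingPairs a b n).ncard = (meetingPairs a' b' n).ncard := by
  rw [← ncard_meetingPairs_add_const a' b' (a - a'), add_sub_cancel,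
    show b' + (a - a') = b by omega]

theorem meets_cons_cons_iff {n : ℕ} {a b : ℤ} (hab : a ≠ b) (L M : Fin (n + 1) → ℤ) :
    Meets (Fin.cons a L : Fin (n + 2) → ℤ) (Fin.cons b M) ↔ Meets L M := by
  simp [Meets, Fin.exists_fin_succ, hab]

theorem image_tail_meetingPairs {a b c d : ℤ} (hab : a ≠ b) (hc : |c - a| = 1)
    (hd : |d - b| = 1) (n : ℕ) :
    Prod.map Fin.tail Fin.tail '' {P ∈ meetingPairs a b (n + 1) | P.1 1 = c ∧ P.2 1 = d} =
      meetingPairs c d n := by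
  ext Q
  constructor
  · rintro ⟨P, ⟨⟨h₁, h₂, hP⟩, hc₁, hd₁⟩, rfl⟩
    rw [← Fin.cons_self_tail P.1, ← Fin.cons_self_tail P.2, h₁.2, h₂.2,
      meets_cons_cons_iff hab] at hP
    exact ⟨image_tail_walksFrom hc n ▸ ⟨P.1, ⟨h₁, hc₁⟩, rfl⟩,
      image_tail_walksFrom hd n ▸ ⟨P.2, ⟨h₂, hd₁⟩, rfl⟩, hP⟩
  · rintro ⟨h₁, h₂, hQ⟩
    refine ⟨(Fin.cons a Q.1, Fin.cons b Q.2), ⟨⟨⟨h₁.1.cons (by rw [h₁.2, hc]), rfl⟩,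
      ⟨h₂.1.cons (by rw [h₂.2, hd]), rfl⟩, (meets_cons_cons_iff hab _ _).mpr hQ⟩, ?_, ?_⟩, ?_⟩
    · simpa using h₁.2
    · simpa using h₂.2
    · simp

theorem ncard_meetingPairs_first_step {a b c d : ℤ} (hab : a ≠ b) (hc : |c - a| = 1)
    (hd : |d - b| = 1) (n : ℕ) :
    {P ∈ meetingPairs a b (n + 1) | P.1 1 = c ∧ P.2 1 = d}.ncard = (meetingPairs c d n).ncard := by
  rw [← image_tail_meetingPairs hab hc hd n, Set.InjOn.ncard_image]
  refine ((Fin.tail_injOn_head_eq a).prodMap (Fin.tail_injOn_head_eq b)).mono ?_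
  rintro P ⟨⟨⟨-, h₁⟩, ⟨-, h₂⟩, -⟩, -⟩
  exact ⟨h₁, h₂⟩

theorem ncard_meetingPairs_succ {a b : ℤ} (hab : a ≠ b) (n : ℕ) :
    (meetingPairs a b (n + 1)).ncard =
      (meetingPairs (a + 1) (b + 1) n).ncard + (meetingPairs (a + 1) (b - 1) n).ncard +
        ((meetingPairs (a - 1) (b + 1) n).ncard + (meetingPairs (a - 1) (b - 1) n).ncard) := by
  have hsplit₂ : ∀ c, {P ∈ meetingPairs a b (n + 1) | P.1 1 = c}.ncard =
      {P ∈ meetingPairs a b (n + 1) | P.1 1 = c ∧ P.2 1 = b + 1}.ncard +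
        {P ∈ meetingPairs a b (n + 1) | P.1 1 = c ∧ P.2 1 = b - 1}.ncard := by
    intro c
    rw [Set.ncard_eq_ncard_sep_add_ncard_sep
      ((meetingPairs_finite a b (n + 1)).subset (Set.sep_subset _ _))
      (fun P hP => apply_one_of_mem_walksFrom hP.1.2.1) (fun P _ h₁ h₂ => by omega)]
    simp only [Set.sep_ofPred, and_assoc]
  rw [Set.ncard_eq_ncard_sep_add_ncard_sep (meetingPairs_finite a b (n + 1))
      (fun P hP => apply_one_of_mem_walksFrom hP.1) (fun P _ h₁ h₂ => by omega),
    hsplit₂, hsplit₂]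
  have hup : ∀ e : ℤ, |e + 1 - e| = 1 := by simp
  have hdown : ∀ e : ℤ, |e - 1 - e| = 1 := by simp
  rw [ncard_meetingPairs_first_step hab (hup a) (hup b),
    ncard_meetingPairs_first_step hab (hup a) (hdown b),
    ncard_meetingPairs_first_step hab (hdown a) (hup b),
    ncard_meetingPairs_first_step hab (hdown a) (hdown b)]

theorem ncard_meetingPairs_zero_succ {b : ℤ} (hb : b ≠ 0) (n : ℕ) :
    (meetingPairs 0 b (n + 1)).ncard = (meetingPairs 0 (b - 2) n).ncard +
      2 * (meetingPairs 0 b n).ncard + (meetingPairs 0 (b + 2) n).ncard := by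
  rw [ncard_meetingPairs_succ hb.symm,
    ncard_meetingPairs_congr (a' := 0) (b' := b) (show b + 1 - (0 + 1) = b - 0 by ring),
    ncard_meetingPairs_congr (a' := 0) (b' := b - 2) (show b - 1 - (0 + 1) = b - 2 - 0 by ring),
    ncard_meetingPairs_congr (a' := 0) (b' := b + 2) (show b + 1 - (0 - 1) = b + 2 - 0 by ring),
    ncard_meetingPairs_congr (a' := 0) (b' := b) (show b - 1 - (0 - 1) = b - 0 by ring)]
  ring

theorem catGF_eq_mk_catalan : catGF = PowerSeries.mk fun n => (catalan n : ℚ) := by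
  ext n
  rw [catGF, coeff_mk, coeff_mk, catalan_eq_centralBinom_div,
    Nat.cast_div (Nat.succ_dvd_centralBinom n) (by exact_mod_cast Nat.succ_ne_zero n),
    Nat.centralBinom]
  push_cast
  ring

theorem catGF_eq_one_add_X_mul_sq : catGF = 1 + X * catGF ^ 2 := by
  rw [catGF_eq_mk_catalan]
  ext (_ | n)
  · simp
  · rw [map_add, coeff_succ_X_mul, coeff_one, if_neg n.succ_ne_zero, zero_add, sq, coeff_mul]
    simp only [coeff_mk, catalan_succ', Nat.cast_sum, Nat.cast_mul]

theorem DGF_eq_X_mul_one_add_sq : DGF = X * (1 + DGF) ^ 2 := by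
  rw [DGF, add_sub_cancel, sub_eq_iff_eq_add', ← catGF_eq_one_add_X_mul_sq]

theorem constantCoeff_DGF : constantCoeff DGF = 0 := by
  rw [DGF, map_sub, ← coeff_zero_eq_constantCoeff_apply, catGF_eq_mk_catalan, coeff_mk]
  simp

theorem inv_one_sub_four_mul_X : (1 - 4 * X : ℚ⟦X⟧)⁻¹ = PowerSeries.mk fun n => 4 ^ n := by
  rw [inv_eq_iff_mul_eq_one (by simp)]
  simpa [rescale_mk, rescale_X, show C (4 : ℚ) = 4 from map_ofNat C 4] using
    congrArg (rescale (4 : ℚ)) (mk_one_mul_one_sub_eq_one ℚ)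

theorem DGF_pow_succ_mul (j : ℕ) (F : ℚ⟦X⟧) :
    DGF ^ (j + 1) * F = X * (DGF ^ j * F + 2 * (DGF ^ (j + 1) * F) + DGF ^ (j + 2) * F) := by
  calc DGF ^ (j + 1) * F = DGF ^ j * DGF * F := by ring
    _ = DGF ^ j * (X * (1 + DGF) ^ 2) * F := by rw [← DGF_eq_X_mul_one_add_sq]
    _ = _ := by ring

theorem ncard_meetingPairs_eq_coeff (n i : ℕ) :
    ((meetingPairs 0 (2 * i) n).ncard : ℚ) = coeff n (DGF ^ i * (1 - 4 * X)⁻¹) := by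
  induction n generalizing i with
  | zero =>
    rcases i with _ | j
    · simp [ncard_meetingPairs_self, inv_one_sub_four_mul_X]
    · rw [meetingPairs_zero_of_ne (by omega), Set.ncard_empty, coeff_zero_eq_constantCoeff_apply,
        map_mul, map_pow, constantCoeff_DGF, zero_pow j.succ_ne_zero, zero_mul, Nat.cast_zero]
  | succ n ih =>
    rcases i with _ | j
    · simp [ncard_meetingPairs_self, inv_one_sub_four_mul_X]
    · have hrec := ncard_meetingPairs_zero_succ (b := 2 * (j + 1 : ℕ)) (by omega) n
      rw [show 2 * ((j + 1 : ℕ) : ℤ) - 2 = 2 * (j : ℕ) by push_cast; ring,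
        show 2 * ((j + 1 : ℕ) : ℤ) + 2 = 2 * (j + 2 : ℕ) by push_cast; ring] at hrec
      rw [hrec, DGF_pow_succ_mul, coeff_succ_X_mul, Nat.cast_add, Nat.cast_add, Nat.cast_mul,
        ih, ih, ih]
      simp only [map_add, two_mul, Nat.cast_ofNat]

theorem stmt12_general (i : ℕ) :
    PowerSeries.mk (fun n => (Nat.card (MSet i n) : ℚ)) =
      DGF ^ i * (1 - 4 * PowerSeries.X)⁻¹ := by
  ext n
  rw [coeff_mk, MSet_eq_meetingPairs, Nat.card_coe_set_eq]
  exact ncard_meetingPairs_eq_coeff n i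

theorem stmt12 (i : ℕ) (hi : 1 ≤ i) :
    PowerSeries.mk (fun n => (Nat.card (MSet i n) : ℚ)) =
      DGF ^ i * (1 - 4 * PowerSeries.X)⁻¹ :=
  stmt12_general i
end

section
/- For i, j ≥ 1, the generating function V_{i,j}(t) for triples of pairwise nonintersecting walks starting at heights 0, 2i, 2i+2j satisfies V_{i,j}(t) = (1/(1−8t))·(1 − D(2t)^i)·(1 − D(2t)^j), where D(t) = C(t) − 1 and C(t) is the Catalan generating function. -/
open PowerSeries Finset

/-!
Because the starting heights differ by even amounts, two of the walks never meet iff they stay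
strictly ordered, so vicious triples are ordered triples. Splitting off the first steps of the
three walks (eight choices) expresses the number of ordered triples of length `n + 1` with
half-gaps `x + 1, y + 1` through those of length `n` with the new half-gaps; the count vanishes
when a half-gap is `0` and equals `1` at length `0`. With `D₂(t) = D(2t)`, the Catalan equation
`C = 1 + t C²` becomes `D₂ = 2t (1 + D₂)²`, and with it `(1 - 8t)⁻¹ (1 - D₂^x) (1 - D₂^y)`
satisfies the same recursion and boundary values.
-/

lemma catGF_eq_map_catalanSeries : catGF = map (Nat.castRingHom ℚ) catalanSeries := by
  ext n
  rw [coeff_map, catalanSeries_coeff, catGF, coeff_mk, ← Nat.centralBinom_eq_two_mul_choose,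
    ← succ_mul_catalan_eq_centralBinom, div_eq_iff (by positivity)]
  push_cast
  ring

lemma rescale_two_DGF_eq :
    rescale (2 : ℚ) DGF = 2 * X * (1 + rescale (2 : ℚ) DGF) ^ 2 := by
  have hC : catGF ^ 2 * X + 1 = catGF := by
    simpa [catGF_eq_map_catalanSeries] using
      congrArg (map (Nat.castRingHom ℚ)) catalanSeries_sq_mul_X_add_one
  have hD : DGF = X * (1 + DGF) ^ 2 := by
    rw [DGF]
    linear_combination -hC
  conv_lhs => rw [hD]
  rw [map_mul, map_pow, map_add, map_one, rescale_X, ← map_ofNat C 2]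

noncomputable def viciousGF (x y : ℕ) : ℚ⟦X⟧ :=
  (1 - 8 * X)⁻¹ * (1 - rescale (2 : ℚ) DGF ^ x) * (1 - rescale (2 : ℚ) DGF ^ y)

/-- If `x + 1` is the half-gap between two adjacent walks, `gapAfter x a b` is the half-gap after
the lower one steps `a` and the upper one steps `b` (`true` meaning up). -/
def gapAfter (x : ℕ) (a b : Bool) : ℕ := x + b.toNat + (!a).toNat

lemma viciousGF_zero_left (y : ℕ) : viciousGF 0 y = 0 := by simp [viciousGF]

lemma viciousGF_zero_right (x : ℕ) : viciousGF x 0 = 0 := by simp [viciousGF]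

lemma constantCoeff_viciousGF_succ (x y : ℕ) : constantCoeff (viciousGF (x + 1) (y + 1)) = 1 := by
  have : constantCoeff (rescale (2 : ℚ) DGF) = 0 := by
    rw [rescale_two_DGF_eq]; simp
  simp [viciousGF, this]

lemma viciousGF_succ_succ (x y : ℕ) :
    viciousGF (x + 1) (y + 1) =
      1 + X * ∑ s : Bool × Bool × Bool,
        viciousGF (gapAfter x s.1 s.2.1) (gapAfter y s.2.1 s.2.2) := by
  have h8 : (1 - 8 * X : ℚ⟦X⟧) * (1 - 8 * X)⁻¹ = 1 := PowerSeries.mul_inv_cancel _ (by simp)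
  set D := rescale (2 : ℚ) DGF with hD
  simp only [viciousGF, Fintype.sum_prod_type, Fintype.sum_bool, gapAfter, Bool.toNat_true,
    Bool.toNat_false, Bool.not_true, Bool.not_false, ← hD]
  linear_combination
    (1 - 8 * X)⁻¹ * (D ^ x * D ^ y * D - D ^ x - D ^ y) * rescale_two_DGF_eq + h8

lemma IsWalk.apply_succ_eq {n : ℕ} {L : Fin (n + 1) → ℤ} (h : IsWalk n L) (k : Fin n) :
    L k.succ = L k.castSucc + 1 ∨ L k.succ = L k.castSucc - 1 := by
  have := h k
  rw [abs_eq zero_le_one] at this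
  omega

lemma IsWalk.lt_of_forall_ne {n : ℕ} {L L' : Fin (n + 1) → ℤ} (hL : IsWalk n L)
    (hL' : IsWalk n L') (h₀ : L 0 ≤ L' 0) (heven : Even (L' 0 - L 0))
    (hne : ∀ k, L k ≠ L' k) (k : Fin (n + 1)) : L k < L' k := by
  -- the gap stays even, so it cannot change sign without vanishing
  suffices Even (L' k - L k) ∧ L k < L' k from this.2
  induction k using Fin.induction with
  | zero => exact ⟨heven, h₀.lt_of_ne (hne 0)⟩
  | succ k ih =>
    have := hL.apply_succ_eq k
    have := hL'.apply_succ_eq k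
    have := hne k.succ
    simp only [Int.even_iff] at ih ⊢
    omega

lemma isWalk_cons_iff {n : ℕ} {v : ℤ} {L : Fin (n + 1) → ℤ} :
    IsWalk (n + 1) (Fin.cons v L : Fin (n + 2) → ℤ) ↔ |L 0 - v| = 1 ∧ IsWalk n L := by
  simp only [IsWalk, Fin.forall_fin_succ (n := n), ← Fin.succ_castSucc, Fin.cons_succ,
    Fin.castSucc_zero, Fin.cons_zero]

/-- The lowest walk starts at an arbitrary height `u`, so that removing the first steps needs no
translation. -/
def OrderedTriples (u : ℤ) (x y n : ℕ) :
    Set ((Fin (n + 1) → ℤ) × (Fin (n + 1) → ℤ) × (Fin (n + 1) → ℤ)) :=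
  {T | IsWalk n T.1 ∧ IsWalk n T.2.1 ∧ IsWalk n T.2.2 ∧
    T.1 0 = u ∧ T.2.1 0 = u + 2 * x ∧ T.2.2 0 = u + 2 * x + 2 * y ∧
    ∀ k, T.1 k < T.2.1 k ∧ T.2.1 k < T.2.2 k}

lemma VSet_eq_orderedTriples (i j n : ℕ) : VSet i j n = OrderedTriples 0 i j n := by
  ext ⟨L₁, L₂, L₃⟩
  simp only [VSet, USet, OrderedTriples, Meets, Set.mem_ofPred_eq, zero_add, not_exists]
  constructor
  · rintro ⟨⟨w₁, w₂, w₃, h₁, h₂, h₃⟩, ne₁₂, ne₂₃, -⟩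
    refine ⟨w₁, w₂, w₃, h₁, h₂, h₃, fun k =>
      ⟨w₁.lt_of_forall_ne w₂ ?_ ?_ ne₁₂ k, w₂.lt_of_forall_ne w₃ ?_ ?_ ne₂₃ k⟩⟩ <;>
    simp only [h₁, h₂, h₃, Int.even_iff] <;> omega
  · rintro ⟨w₁, w₂, w₃, h₁, h₂, h₃, hlt⟩
    exact ⟨⟨w₁, w₂, w₃, h₁, h₂, h₃⟩, fun k => (hlt k).1.ne, fun k => (hlt k).2.ne,
      fun k => ((hlt k).1.trans (hlt k).2).ne⟩

lemma orderedTriples_zero_left (u : ℤ) (y n : ℕ) : OrderedTriples u 0 y n = ∅ := by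
  ext T
  simp only [OrderedTriples, Set.mem_ofPred_eq, Set.mem_empty_iff_false, iff_false]
  rintro ⟨-, -, -, h₁, h₂, -, hlt⟩
  have := (hlt 0).1
  omega

lemma orderedTriples_zero_right (u : ℤ) (x n : ℕ) : OrderedTriples u x 0 n = ∅ := by
  ext T
  simp only [OrderedTriples, Set.mem_ofPred_eq, Set.mem_empty_iff_false, iff_false]
  rintro ⟨-, -, -, -, h₂, h₃, hlt⟩
  have := (hlt 0).2
  omega

lemma card_orderedTriples_length_zero (u : ℤ) (x y : ℕ) :
    Nat.card (OrderedTriples u (x + 1) (y + 1) 0) = 1 := by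
  rw [Nat.card_eq_one_iff_exists]
  refine ⟨⟨(fun _ => u, fun _ => u + 2 * (x + 1 : ℕ),
      fun _ => u + 2 * (x + 1 : ℕ) + 2 * (y + 1 : ℕ)), fun k => k.elim0, fun k => k.elim0,
      fun k => k.elim0, rfl, rfl, rfl, fun _ => by dsimp only; omega⟩, ?_⟩
  rintro ⟨T, -, -, -, h₁, h₂, h₃, -⟩
  ext k <;> rw [Fin.fin_one_eq_zero k] <;> assumption

def stepOf (b : Bool) : ℤ := if b then 1 else -1

lemma abs_stepOf (b : Bool) : |stepOf b| = 1 := by cases b <;> simp [stepOf]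

lemma stepOf_injective : Function.Injective stepOf := by decide

lemma stepOf_add_two_mul_gapAfter (x : ℕ) (a b : Bool) :
    stepOf a + 2 * (gapAfter x a b : ℤ) = 2 * (x + 1 : ℕ) + stepOf b := by
  cases a <;> cases b <;> simp [stepOf, gapAfter] <;> ring

lemma IsWalk.apply_one_eq {n : ℕ} {L : Fin (n + 2) → ℤ} (h : IsWalk (n + 1) L) :
    L 1 = L 0 + stepOf (decide (L 0 < L 1)) := by
  have := h.apply_succ_eq 0
  simp only [Fin.succ_zero_eq_one, Fin.castSucc_zero] at this
  by_cases hlt : L 0 < L 1 <;> simp [stepOf, hlt] <;> omega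

section FirstStep

variable {u : ℤ} {x y n : ℕ}

abbrev FirstStepsAndTail (u : ℤ) (x y n : ℕ) :=
  Σ s : Bool × Bool × Bool,
    OrderedTriples (u + stepOf s.1) (gapAfter x s.1 s.2.1) (gapAfter y s.2.1 s.2.2) n

lemma cons_mem_orderedTriples {s : Bool × Bool × Bool}
    {T : (Fin (n + 1) → ℤ) × (Fin (n + 1) → ℤ) × (Fin (n + 1) → ℤ)}
    (hT : T ∈ OrderedTriples (u + stepOf s.1) (gapAfter x s.1 s.2.1)
      (gapAfter y s.2.1 s.2.2) n) :
    ((Fin.cons u T.1 : Fin (n + 2) → ℤ),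
      (Fin.cons (u + 2 * (x + 1 : ℕ)) T.2.1 : Fin (n + 2) → ℤ),
      (Fin.cons (u + 2 * (x + 1 : ℕ) + 2 * (y + 1 : ℕ)) T.2.2 : Fin (n + 2) → ℤ)) ∈
      OrderedTriples u (x + 1) (y + 1) (n + 1) := by
  obtain ⟨w₁, w₂, w₃, h₁, h₂, h₃, hlt⟩ := hT
  have e₁ := stepOf_add_two_mul_gapAfter x s.1 s.2.1
  have e₂ := stepOf_add_two_mul_gapAfter y s.2.1 s.2.2
  refine ⟨isWalk_cons_iff.2 ⟨?_, w₁⟩, isWalk_cons_iff.2 ⟨?_, w₂⟩, isWalk_cons_iff.2 ⟨?_, w₃⟩,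
    rfl, rfl, rfl, Fin.cases ?_ fun k => ?_⟩
  · rw [h₁, add_sub_cancel_left, abs_stepOf]
  · rw [h₂, ← abs_stepOf s.2.1]
    congr 1
    omega
  · rw [h₃, ← abs_stepOf s.2.2]
    congr 1
    omega
  · simp only [Fin.cons_zero]
    omega
  · simpa only [Fin.cons_succ] using hlt k

def consFirstSteps (u : ℤ) (x y n : ℕ) :
    FirstStepsAndTail u x y n → OrderedTriples u (x + 1) (y + 1) (n + 1)
  | ⟨_, _, hT⟩ => ⟨_, cons_mem_orderedTriples hT⟩

lemma consFirstSteps_injective : Function.Injective (consFirstSteps u x y n) := by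
  rintro ⟨s, T, hT⟩ ⟨t, T', hT'⟩ h
  simp only [consFirstSteps, Subtype.mk.injEq, Prod.mk.injEq, Fin.cons_inj, true_and] at h
  obtain ⟨e₁, e₂, e₃⟩ := h
  obtain ⟨-, -, -, h₁, h₂, h₃, -⟩ := hT
  obtain ⟨-, -, -, h₁', h₂', h₃', -⟩ := hT'
  have := stepOf_add_two_mul_gapAfter x s.1 s.2.1
  have := stepOf_add_two_mul_gapAfter y s.2.1 s.2.2
  have := stepOf_add_two_mul_gapAfter x t.1 t.2.1
  have := stepOf_add_two_mul_gapAfter y t.2.1 t.2.2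
  rw [e₁] at h₁
  rw [e₂] at h₂
  rw [e₃] at h₃
  obtain rfl : s = t := by
    refine Prod.ext (stepOf_injective ?_)
      (Prod.ext (stepOf_injective ?_) (stepOf_injective ?_)) <;> omega
  exact congrArg (Sigma.mk s) (Subtype.ext (Prod.ext e₁ (Prod.ext e₂ e₃)))

lemma consFirstSteps_surjective : Function.Surjective (consFirstSteps u x y n) := by
  rintro ⟨T, w₁, w₂, w₃, rfl, h₂, h₃, hlt⟩
  have o₁ := w₁.apply_one_eq
  have o₂ := w₂.apply_one_eq
  have o₃ := w₃.apply_one_eq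
  generalize decide (T.1 0 < T.1 1) = a at o₁
  generalize decide (T.2.1 0 < T.2.1 1) = b at o₂
  generalize decide (T.2.2 0 < T.2.2 1) = c at o₃
  have e₁ := stepOf_add_two_mul_gapAfter x a b
  have e₂ := stepOf_add_two_mul_gapAfter y b c
  rw [← Fin.cons_self_tail T.1, isWalk_cons_iff] at w₁
  rw [← Fin.cons_self_tail T.2.1, isWalk_cons_iff] at w₂
  rw [← Fin.cons_self_tail T.2.2, isWalk_cons_iff] at w₃
  have htail : (Fin.tail T.1, Fin.tail T.2.1, Fin.tail T.2.2) ∈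
      OrderedTriples (T.1 0 + stepOf a) (gapAfter x a b) (gapAfter y b c) n := by
    refine ⟨w₁.2, w₂.2, w₃.2, ?_, ?_, ?_, fun k => hlt k.succ⟩ <;>
    simp only [Fin.tail, Fin.succ_zero_eq_one] <;> omega
  refine ⟨⟨(a, b, c), _, htail⟩, Subtype.ext ?_⟩
  simp only [consFirstSteps]
  rw [← h₃, ← h₂]
  simp only [Fin.cons_self_tail]

end FirstStep

lemma finite_orderedTriples (u : ℤ) (x y n : ℕ) : (OrderedTriples u x y n).Finite := by
  induction n generalizing u x y with
  | zero =>
    rcases x with _ | x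
    · simp [orderedTriples_zero_left]
    rcases y with _ | y
    · simp [orderedTriples_zero_right]
    exact Set.finite_coe_iff.1
      (Nat.finite_of_card_ne_zero (by rw [card_orderedTriples_length_zero]; exact one_ne_zero))
  | succ n ih =>
    rcases x with _ | x
    · simp [orderedTriples_zero_left]
    rcases y with _ | y
    · simp [orderedTriples_zero_right]
    have := fun u x y => (ih u x y).to_subtype
    exact Set.finite_coe_iff.1 (Finite.of_surjective _ consFirstSteps_surjective)

lemma card_orderedTriples_succ (u : ℤ) (x y n : ℕ) :
    Nat.card (OrderedTriples u (x + 1) (y + 1) (n + 1)) =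
      ∑ s : Bool × Bool × Bool,
        Nat.card (OrderedTriples (u + stepOf s.1) (gapAfter x s.1 s.2.1)
          (gapAfter y s.2.1 s.2.2) n) := by
  have := fun u x y => (finite_orderedTriples u x y n).to_subtype
  rw [← Nat.card_sigma]
  exact (Nat.card_eq_of_bijective _ ⟨consFirstSteps_injective, consFirstSteps_surjective⟩).symm

theorem card_orderedTriples (u : ℤ) (x y n : ℕ) :
    (Nat.card (OrderedTriples u x y n) : ℚ) = coeff n (viciousGF x y) := by
  induction n generalizing u x y with
  | zero =>
    rcases x with _ | x
    · simp [orderedTriples_zero_left, viciousGF_zero_left]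
    rcases y with _ | y
    · simp [orderedTriples_zero_right, viciousGF_zero_right]
    rw [card_orderedTriples_length_zero, coeff_zero_eq_constantCoeff_apply,
      constantCoeff_viciousGF_succ, Nat.cast_one]
  | succ n ih =>
    rcases x with _ | x
    · simp [orderedTriples_zero_left, viciousGF_zero_left]
    rcases y with _ | y
    · simp [orderedTriples_zero_right, viciousGF_zero_right]
    rw [card_orderedTriples_succ, viciousGF_succ_succ, map_add, coeff_succ_X_mul, coeff_one,
      if_neg n.succ_ne_zero, zero_add, Nat.cast_sum, map_sum]
    simp only [ih]

theorem stmt15_general (i j : ℕ) :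
    PowerSeries.mk (fun n => (Nat.card (VSet i j n) : ℚ)) =
      (1 - 8 * PowerSeries.X)⁻¹ *
        (1 - (PowerSeries.rescale (2 : ℚ) DGF) ^ i) *
        (1 - (PowerSeries.rescale (2 : ℚ) DGF) ^ j) := by
  ext n
  rw [coeff_mk, VSet_eq_orderedTriples, card_orderedTriples]
  rfl

theorem stmt15 (i j : ℕ) (hi : 1 ≤ i) (hj : 1 ≤ j) :
    PowerSeries.mk (fun n => (Nat.card (VSet i j n) : ℚ)) =
      (1 - 8 * PowerSeries.X)⁻¹ *
        (1 - (PowerSeries.rescale (2 : ℚ) DGF) ^ i) *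
        (1 - (PowerSeries.rescale (2 : ℚ) DGF) ^ j) :=
  stmt15_general i j
end

section
/- For i, j ≥ 1, the identity V_{i,j}(t) = N_i(2t) + N_j(2t) − N_{i+j}(2t) holds, where N_i(t) = (1 − D(t)^i)/(1−4t) is the generating function for pairs of nonintersecting walks starting at distance 2i. -/
open PowerSeries Finset

/-!
Walks starting at even distance cannot cross without meeting, so a triple is vicious exactly when
neither its lower nor its upper pair meets. With the third walk free, triples whose lower pair never
meets number `2ⁿ |N(i,n)|`, and those whose upper pair never meets `2ⁿ |N(j,n)|`. Exchanging the
tails of the middle walk and of whichever neighbour it meets first, from that first meeting on, is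
an involution on triples; it exchanges the triples in which one of the two pairs never meets with
those whose outer walks never meet, of which there are `2ⁿ |N(i+j,n)|`. Inclusion–exclusion gives
`|V(i,j,n)| = 2ⁿ (|N(i,n)| + |N(j,n)| - |N(i+j,n)|)`, the coefficient identity.
-/

section SwapAfter

variable {ι α : Type*} [LinearOrder ι]

def swapAfter (t : WithTop ι) (f g : ι → α) : ι → α :=
  fun k => if (k : WithTop ι) ≤ t then f k else g k

variable {f g : ι → α} {t : WithTop ι} {k : ι}

lemma swapAfter_of_le (hk : (k : WithTop ι) ≤ t) : swapAfter t f g k = f k := if_pos hk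

lemma swapAfter_of_lt (hk : t < k) : swapAfter t f g k = g k := if_neg hk.not_ge

lemma swapAfter_swapAfter : swapAfter t (swapAfter t f g) (swapAfter t g f) = f := by
  funext k
  unfold swapAfter
  split_ifs <;> rfl

lemma swapAfter_eq_swapAfter_iff : swapAfter t f g k = swapAfter t g f k ↔ f k = g k := by
  unfold swapAfter
  split_ifs
  · rfl
  · exact eq_comm

end SwapAfter

lemma swapAfter_apply_zero {n : ℕ} {α : Type*} (t : WithTop (Fin (n + 1))) (f g : Fin (n + 1) → α) :
    swapAfter t f g 0 = f 0 :=
  swapAfter_of_le (WithTop.coe_le_iff.2 fun _ _ => Fin.zero_le _)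

section FirstMeet

variable {ι α : Type*} [LinearOrder ι] [Fintype ι] [DecidableEq α]

/-- `⊤` if `f` and `g` never agree, so that `swapAfter (firstMeet f g) f g = f` in that case. -/
def firstMeet (f g : ι → α) : WithTop ι := (univ.filter fun k => f k = g k).min

variable {f g : ι → α} {t : WithTop ι} {k : ι}

lemma firstMeet_le (hk : f k = g k) : firstMeet f g ≤ k :=
  Finset.min_le (by simpa using hk)

lemma ne_of_lt_firstMeet (hk : (k : WithTop ι) < firstMeet f g) : f k ≠ g k :=
  fun e => (firstMeet_le e).not_gt hk

lemma apply_eq_of_firstMeet_eq (hk : firstMeet f g = k) : f k = g k := by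
  simpa using Finset.mem_of_min hk

lemma firstMeet_eq_top_iff : firstMeet f g = ⊤ ↔ ∀ k, f k ≠ g k := by
  simp [firstMeet, Finset.min_eq_top, filter_eq_empty_iff]

lemma le_firstMeet_iff : t ≤ firstMeet f g ↔ ∀ k : ι, (k : WithTop ι) < t → f k ≠ g k := by
  simp only [firstMeet, Finset.le_min_iff, mem_filter, mem_univ, true_and]
  exact forall_congr' fun k => not_imp_not.symm.trans (by rw [not_le])

lemma coe_lt_firstMeet_iff {s : ι} : (s : WithTop ι) < firstMeet f g ↔ ∀ k ≤ s, f k ≠ g k := by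
  refine ⟨fun hs k hk => ne_of_lt_firstMeet ((WithTop.coe_le_coe.2 hk).trans_lt hs), fun h => ?_⟩
  by_contra! hle
  obtain ⟨m, hm⟩ := WithTop.ne_top_iff_exists.1 (hle.trans_lt (WithTop.coe_lt_top s)).ne
  exact h m (WithTop.coe_le_coe.1 (hm ▸ hle)) (apply_eq_of_firstMeet_eq hm.symm)

lemma firstMeet_comm : firstMeet f g = firstMeet g f := by
  simp only [firstMeet, eq_comm]

lemma firstMeet_swapAfter : firstMeet (swapAfter t f g) (swapAfter t g f) = firstMeet f g := by
  simp only [firstMeet, swapAfter_eq_swapAfter_iff]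

end FirstMeet

section SwitchMiddle

variable {ι α : Type*} [LinearOrder ι] [Fintype ι] [DecidableEq α]

def switchMiddle (T : (ι → α) × (ι → α) × (ι → α)) : (ι → α) × (ι → α) × (ι → α) :=
  if firstMeet T.2.1 T.2.2 < firstMeet T.1 T.2.1 then
    (T.1, swapAfter (firstMeet T.2.1 T.2.2) T.2.1 T.2.2,
      swapAfter (firstMeet T.2.1 T.2.2) T.2.2 T.2.1)
  else
    (swapAfter (firstMeet T.1 T.2.1) T.1 T.2.1, swapAfter (firstMeet T.1 T.2.1) T.2.1 T.1, T.2.2)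

lemma switchMiddle_mk (f g h : ι → α) :
    switchMiddle (f, g, h) =
      if firstMeet g h < firstMeet f g then
        (f, swapAfter (firstMeet g h) g h, swapAfter (firstMeet g h) h g)
      else (swapAfter (firstMeet f g) f g, swapAfter (firstMeet f g) g f, h) :=
  rfl

lemma switchMiddle_involutive : Function.Involutive (switchMiddle (ι := ι) (α := α)) := by
  rintro ⟨f, g, h⟩
  by_cases hlt : firstMeet g h < firstMeet f g
  · obtain ⟨s, hs⟩ := WithTop.ne_top_iff_exists.1 (ne_top_of_lt hlt)
    have hlt' : firstMeet g h < firstMeet f (swapAfter (firstMeet g h) g h) := by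
      rw [← hs, coe_lt_firstMeet_iff] at hlt ⊢
      intro k hk
      rw [swapAfter_of_le (WithTop.coe_le_coe.2 hk)]
      exact hlt k hk
    rw [switchMiddle_mk f g h, if_pos hlt, switchMiddle_mk, firstMeet_swapAfter, if_pos hlt',
      swapAfter_swapAfter, swapAfter_swapAfter]
  · have hle : firstMeet f g ≤ firstMeet (swapAfter (firstMeet f g) g f) h := by
      rw [not_lt, le_firstMeet_iff] at hlt
      rw [le_firstMeet_iff]
      intro k hk
      rw [swapAfter_of_le hk.le]
      exact hlt k hk
    rw [switchMiddle_mk f g h, if_neg hlt, switchMiddle_mk, firstMeet_swapAfter, if_neg hle.not_gt,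
      swapAfter_swapAfter, swapAfter_swapAfter]

lemma switchMiddle_inner_ne {f g h : ι → α} (hfh : ∀ k, f k ≠ h k) :
    (∀ k, (switchMiddle (f, g, h)).1 k ≠ (switchMiddle (f, g, h)).2.1 k) ∨
      ∀ k, (switchMiddle (f, g, h)).2.1 k ≠ (switchMiddle (f, g, h)).2.2 k := by
  rw [switchMiddle_mk]
  split_ifs with hlt
  · refine Or.inl fun k => ?_
    dsimp only
    rcases le_or_gt (k : WithTop ι) (firstMeet g h) with hk | hk
    · rw [swapAfter_of_le hk]
      exact ne_of_lt_firstMeet (hk.trans_lt hlt)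
    · rw [swapAfter_of_lt hk]
      exact hfh k
  · refine Or.inr fun k => ?_
    dsimp only
    rcases lt_trichotomy (k : WithTop ι) (firstMeet f g) with hk | hk | hk
    · rw [swapAfter_of_le hk.le]
      exact ne_of_lt_firstMeet (hk.trans_le (not_lt.1 hlt))
    · rw [swapAfter_of_le hk.le, ← apply_eq_of_firstMeet_eq hk.symm]
      exact hfh k
    · rw [swapAfter_of_lt hk]
      exact hfh k

end SwitchMiddle

section BelowUntilMeet

variable {ι α : Type*} [LinearOrder ι] [Fintype ι] [LinearOrder α]

def BelowUntilMeet (f g : ι → α) : Prop :=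
  ∀ k : ι, (k : WithTop ι) ≤ firstMeet f g → f k ≤ g k

variable {f g h : ι → α}

lemma BelowUntilMeet.lt_of_forall_ne (hfg : BelowUntilMeet f g) (hne : ∀ k, f k ≠ g k) (k : ι) :
    f k < g k :=
  (hfg k ((firstMeet_eq_top_iff.2 hne).symm ▸ le_top)).lt_of_ne (hne k)

lemma BelowUntilMeet.swapAfter_le (hfg : BelowUntilMeet f g) (k : ι) :
    swapAfter (firstMeet f g) f g k ≤ g k := by
  rcases le_or_gt (k : WithTop ι) (firstMeet f g) with hk | hk
  · rw [swapAfter_of_le hk]; exact hfg k hk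
  · rw [swapAfter_of_lt hk]

lemma BelowUntilMeet.le_swapAfter (hfg : BelowUntilMeet f g) (k : ι) :
    f k ≤ swapAfter (firstMeet f g) g f k := by
  rcases le_or_gt (k : WithTop ι) (firstMeet f g) with hk | hk
  · rw [swapAfter_of_le hk]; exact hfg k hk
  · rw [swapAfter_of_lt hk]

lemma switchMiddle_outer_lt (hfg : BelowUntilMeet f g) (hgh : BelowUntilMeet g h)
    (hne : (∀ k, f k ≠ g k) ∨ ∀ k, g k ≠ h k) (k : ι) :
    (switchMiddle (f, g, h)).1 k < (switchMiddle (f, g, h)).2.2 k := by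
  rw [switchMiddle_mk]
  split_ifs with hlt <;> dsimp only
  · have hfg_ne : ∀ k, f k ≠ g k := hne.resolve_right fun hgh_ne =>
      (firstMeet_eq_top_iff.2 hgh_ne ▸ hlt).not_ge le_top
    exact (hfg.lt_of_forall_ne hfg_ne k).trans_le (hgh.le_swapAfter k)
  · have hgh_ne : ∀ k, g k ≠ h k := hne.elim (fun hfg_ne => firstMeet_eq_top_iff.1 <|
      top_le_iff.1 (firstMeet_eq_top_iff.2 hfg_ne ▸ not_lt.1 hlt)) id
    exact (hfg.swapAfter_le k).trans_lt (hgh.lt_of_forall_ne hgh_ne k)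

end BelowUntilMeet

namespace IsWalk

variable {n : ℕ} {P Q : Fin (n + 1) → ℤ}

lemma step_eq (hP : IsWalk n P) (k : Fin n) :
    P k.succ - P k.castSucc = 1 ∨ P k.succ - P k.castSucc = -1 :=
  abs_eq zero_le_one |>.1 (hP k)

lemma even_sub (hP : IsWalk n P) (hQ : IsWalk n Q) (he : Even (Q 0 - P 0)) (k : Fin (n + 1)) :
    Even (Q k - P k) := by
  induction k using Fin.induction with
  | zero => exact he
  | succ k ih =>
    obtain ⟨r, hr⟩ := ih
    refine ⟨(Q k.succ - P k.succ) / 2, ?_⟩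
    rcases hP.step_eq k with h1 | h1 <;> rcases hQ.step_eq k with h2 | h2 <;> omega

lemma belowUntilMeet (hP : IsWalk n P) (hQ : IsWalk n Q) (h0 : P 0 ≤ Q 0)
    (he : Even (Q 0 - P 0)) : BelowUntilMeet P Q := by
  intro k
  induction k using Fin.induction with
  | zero => exact fun _ => h0
  | succ k ih =>
    intro hk
    have hlt : (k.castSucc : WithTop (Fin (n + 1))) < firstMeet P Q :=
      (WithTop.coe_lt_coe.2 k.castSucc_lt_succ).trans_le hk
    have hle := ih hlt.le
    have hne := ne_of_lt_firstMeet hlt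
    obtain ⟨r, hr⟩ := even_sub hP hQ he k.castSucc
    rcases hP.step_eq k with h1 | h1 <;> rcases hQ.step_eq k with h2 | h2 <;> omega

lemma swapAfter_firstMeet (hP : IsWalk n P) (hQ : IsWalk n Q) :
    IsWalk n (swapAfter (firstMeet P Q) P Q) := by
  by_cases htop : firstMeet P Q = ⊤
  · rw [htop]
    intro k
    rw [swapAfter_of_le le_top, swapAfter_of_le le_top]
    exact hP k
  · obtain ⟨s, hs⟩ := WithTop.ne_top_iff_exists.1 htop
    have hPQ := apply_eq_of_firstMeet_eq hs.symm
    rw [← hs]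
    intro k
    rcases le_or_gt k.succ s with h | h
    · rw [swapAfter_of_le (WithTop.coe_le_coe.2 h),
        swapAfter_of_le (WithTop.coe_le_coe.2 (k.castSucc_lt_succ.le.trans h))]
      exact hP k
    · rw [swapAfter_of_lt (WithTop.coe_lt_coe.2 h)]
      rcases le_or_gt k.castSucc s with h' | h'
      · have : k.castSucc = s := le_antisymm h' (Fin.le_castSucc_iff.2 h)
        rw [swapAfter_of_le (WithTop.coe_le_coe.2 h'), this, hPQ, ← this]
        exact hQ k
      · rw [swapAfter_of_lt (WithTop.coe_lt_coe.2 h')]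
        exact hQ k

end IsWalk

def WalkFrom (n : ℕ) (c : ℤ) : Set (Fin (n + 1) → ℤ) := {L | IsWalk n L ∧ L 0 = c}

def walkOfSteps {n : ℕ} (c : ℤ) (b : Fin n → Bool) : Fin (n + 1) → ℤ :=
  fun k => c + Fin.partialSum (fun i => if b i then 1 else -1) k

section WalkCount

variable {n : ℕ} {c : ℤ}

lemma walkOfSteps_succ_sub (b : Fin n → Bool) (k : Fin n) :
    walkOfSteps c b k.succ - walkOfSteps c b k.castSucc = if b k then 1 else -1 := by
  simp only [walkOfSteps, Fin.partialSum_succ]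
  ring

lemma walkOfSteps_injective : Function.Injective (walkOfSteps (n := n) c) := by
  intro b b' hbb'
  funext k
  have := walkOfSteps_succ_sub (c := c) b k
  rw [hbb', walkOfSteps_succ_sub] at this
  cases hb : b k <;> cases hb' : b' k <;> simp_all

lemma range_walkOfSteps : Set.range (walkOfSteps (n := n) c) = WalkFrom n c := by
  ext L
  constructor
  · rintro ⟨b, rfl⟩
    refine ⟨fun k => ?_, by simp [walkOfSteps]⟩
    rw [walkOfSteps_succ_sub]
    split_ifs <;> simp
  · rintro ⟨hL, hL0⟩
    refine ⟨fun k => decide (L k.castSucc < L k.succ), funext fun k => ?_⟩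
    induction k using Fin.induction with
    | zero => simp [walkOfSteps, hL0]
    | succ k ih =>
      have hstep := walkOfSteps_succ_sub (c := c) (fun k => decide (L k.castSucc < L k.succ)) k
      rcases hL.step_eq k with h | h <;> simp only [decide_eq_true_eq] at hstep <;>
        split_ifs at hstep <;> omega

lemma ncard_walkFrom : (WalkFrom n c).ncard = 2 ^ n := by
  rw [← range_walkOfSteps, Set.ncard_range_of_injective walkOfSteps_injective]
  simp

lemma finite_walkFrom : (WalkFrom n c).Finite :=
  range_walkOfSteps (c := c) ▸ Set.finite_range _

end WalkCount

def W13Set (i j n : ℕ) := {T ∈ USet i j n | ¬ Meets T.1 T.2.2}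

section Triples

variable {i j n : ℕ} {T : (Fin (n + 1) → ℤ) × (Fin (n + 1) → ℤ) × (Fin (n + 1) → ℤ)}

lemma belowUntilMeet_of_mem_USet (hT : T ∈ USet i j n) :
    BelowUntilMeet T.1 T.2.1 ∧ BelowUntilMeet T.2.1 T.2.2 := by
  obtain ⟨h1, h2, h3, h10, h20, h30⟩ := hT
  exact ⟨h1.belowUntilMeet h2 (by omega) ⟨i, by omega⟩,
    h2.belowUntilMeet h3 (by omega) ⟨j, by omega⟩⟩

lemma switchMiddle_mem_USet (hT : T ∈ USet i j n) : switchMiddle T ∈ USet i j n := by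
  obtain ⟨f, g, h⟩ := T
  obtain ⟨hf, hg, hh, hf0, hg0, hh0⟩ := hT
  rw [switchMiddle_mk]
  split_ifs
  · refine ⟨hf, hg.swapAfter_firstMeet hh, ?_, hf0, ?_, ?_⟩
    · rw [firstMeet_comm]; exact hh.swapAfter_firstMeet hg
    · exact (swapAfter_apply_zero _ _ _).trans hg0
    · exact (swapAfter_apply_zero _ _ _).trans hh0
  · refine ⟨hf.swapAfter_firstMeet hg, ?_, hh, ?_, ?_, hh0⟩
    · rw [firstMeet_comm]; exact hg.swapAfter_firstMeet hf
    · exact (swapAfter_apply_zero _ _ _).trans hf0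
    · exact (swapAfter_apply_zero _ _ _).trans hg0

lemma switchMiddle_mem_W13Set (hT : T ∈ W12Set i j n ∪ W23Set i j n) :
    switchMiddle T ∈ W13Set i j n := by
  have hU : T ∈ USet i j n := hT.elim (·.1) (·.1)
  refine ⟨switchMiddle_mem_USet hU, ?_⟩
  obtain ⟨f, g, h⟩ := T
  obtain ⟨hfg, hgh⟩ := belowUntilMeet_of_mem_USet hU
  have hne : (∀ k, f k ≠ g k) ∨ ∀ k, g k ≠ h k := by
    simpa only [Meets, not_exists] using hT.imp (·.2) (·.2)
  simp only [Meets, not_exists]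
  exact fun k => (switchMiddle_outer_lt hfg hgh hne k).ne

lemma switchMiddle_mem_W12Set_union_W23Set (hT : T ∈ W13Set i j n) :
    switchMiddle T ∈ W12Set i j n ∪ W23Set i j n := by
  obtain ⟨hU, hfh⟩ := hT
  obtain ⟨f, g, h⟩ := T
  simp only [Meets, not_exists] at hfh
  rcases switchMiddle_inner_ne hfh with hne | hne
  · exact Or.inl ⟨switchMiddle_mem_USet hU, by simpa only [Meets, not_exists] using hne⟩
  · exact Or.inr ⟨switchMiddle_mem_USet hU, by simpa only [Meets, not_exists] using hne⟩

lemma bijOn_switchMiddle :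
    Set.BijOn switchMiddle (W12Set i j n ∪ W23Set i j n) (W13Set i j n) :=
  Set.InvOn.bijOn ⟨fun T _ => switchMiddle_involutive T, fun T _ => switchMiddle_involutive T⟩
    (fun _ => switchMiddle_mem_W13Set) (fun _ => switchMiddle_mem_W12Set_union_W23Set)

lemma VSet_eq_inter : VSet i j n = W12Set i j n ∩ W23Set i j n := by
  ext T
  refine ⟨fun ⟨hU, h12, h23, _⟩ => ⟨⟨hU, h12⟩, hU, h23⟩, fun ⟨⟨hU, h12⟩, _, h23⟩ => ⟨hU, h12, h23, ?_⟩⟩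
  obtain ⟨hfg, hgh⟩ := belowUntilMeet_of_mem_USet hU
  simp only [Meets, not_exists] at h12 h23 ⊢
  exact fun k => ((hfg.lt_of_forall_ne h12 k).trans (hgh.lt_of_forall_ne h23 k)).ne

end Triples

section Count

variable {i j n : ℕ}

lemma isWalk_sub_const_iff {L : Fin (n + 1) → ℤ} (c : ℤ) :
    IsWalk n (L - fun _ => c) ↔ IsWalk n L := by
  simp [IsWalk]

lemma ncard_W12Set : (W12Set i j n).ncard = (NSet i n).ncard * 2 ^ n := by
  have : W12Set i j n =
      (Equiv.prodAssoc _ _ _).symm ⁻¹' (NSet i n ×ˢ WalkFrom n (2 * i + 2 * j)) := by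
    ext ⟨f, g, h⟩
    simp [W12Set, USet, NSet, PairSet, WalkFrom, and_assoc, and_comm, and_left_comm]
  rw [this, Set.ncard_preimage_of_injective_subset_range (Equiv.injective _)
      ((Set.subset_univ _).trans_eq (Equiv.range_eq_univ _).symm),
    Set.ncard_prod, ncard_walkFrom]

lemma ncard_W13Set : (W13Set i j n).ncard = (NSet (i + j) n).ncard * 2 ^ n := by
  have : W13Set i j n = ((Equiv.refl _).prodCongr (Equiv.prodComm _ _)).trans
      (Equiv.prodAssoc _ _ _).symm ⁻¹' (NSet (i + j) n ×ˢ WalkFrom n (2 * i)) := by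
    ext ⟨f, g, h⟩
    simp [W13Set, USet, NSet, PairSet, WalkFrom, mul_add, and_assoc, and_comm, and_left_comm]
  rw [this, Set.ncard_preimage_of_injective_subset_range (Equiv.injective _)
      ((Set.subset_univ _).trans_eq (Equiv.range_eq_univ _).symm),
    Set.ncard_prod, ncard_walkFrom]

lemma ncard_W23Set : (W23Set i j n).ncard = (NSet j n).ncard * 2 ^ n := by
  have : W23Set i j n = (Equiv.prodComm _ _).trans (Equiv.prodCongr
      ((Equiv.subRight fun _ => 2 * (i : ℤ)).prodCongr (Equiv.subRight fun _ => 2 * (i : ℤ)))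
      (Equiv.refl _)) ⁻¹' (NSet j n ×ˢ WalkFrom n 0) := by
    ext ⟨f, g, h⟩
    simp [W23Set, USet, NSet, PairSet, WalkFrom, Meets, isWalk_sub_const_iff,
      sub_eq_iff_eq_add', and_assoc, and_comm, and_left_comm]
  rw [this, Set.ncard_preimage_of_injective_subset_range (Equiv.injective _)
      ((Set.subset_univ _).trans_eq (Equiv.range_eq_univ _).symm),
    Set.ncard_prod, ncard_walkFrom]

lemma finite_USet : (USet i j n).Finite :=
  (finite_walkFrom.prod (finite_walkFrom.prod finite_walkFrom)).subset
    fun _ ⟨hf, hg, hh, hf0, hg0, hh0⟩ => ⟨⟨hf, hf0⟩, ⟨hg, hg0⟩, hh, hh0⟩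

lemma ncard_VSet_add :
    (VSet i j n).ncard + (NSet (i + j) n).ncard * 2 ^ n =
      ((NSet i n).ncard + (NSet j n).ncard) * 2 ^ n := by
  rw [VSet_eq_inter, ← ncard_W13Set, ← bijOn_switchMiddle.ncard_eq, add_comm,
    Set.ncard_union_add_ncard_inter (W12Set i j n) (W23Set i j n)
      (finite_USet.subset fun _ hT => hT.1) (finite_USet.subset fun _ hT => hT.1),
    ncard_W12Set, ncard_W23Set, add_mul]

end Count

theorem stmt17_general (i j : ℕ) :
    PowerSeries.mk (fun n => (Nat.card (VSet i j n) : ℚ)) =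
      PowerSeries.rescale (2 : ℚ) (PowerSeries.mk fun n => (Nat.card (NSet i n) : ℚ)) +
        PowerSeries.rescale (2 : ℚ) (PowerSeries.mk fun n => (Nat.card (NSet j n) : ℚ)) -
        PowerSeries.rescale (2 : ℚ) (PowerSeries.mk fun n => (Nat.card (NSet (i + j) n) : ℚ)) := by
  ext n
  have hcount : ((VSet i j n).ncard : ℚ) + (NSet (i + j) n).ncard * 2 ^ n =
      ((NSet i n).ncard + (NSet j n).ncard) * 2 ^ n := by
    exact_mod_cast ncard_VSet_add
  simp only [map_sub, map_add, coeff_mk, coeff_rescale, Nat.card_coe_set_eq]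
  linarith

theorem stmt17 (i j : ℕ) (hi : 1 ≤ i) (hj : 1 ≤ j) :
    PowerSeries.mk (fun n => (Nat.card (VSet i j n) : ℚ)) =
      PowerSeries.rescale (2 : ℚ) (PowerSeries.mk fun n => (Nat.card (NSet i n) : ℚ)) +
        PowerSeries.rescale (2 : ℚ) (PowerSeries.mk fun n => (Nat.card (NSet j n) : ℚ)) -
        PowerSeries.rescale (2 : ℚ) (PowerSeries.mk fun n => (Nat.card (NSet (i + j) n) : ℚ)) :=
  stmt17_general i j
end
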